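/- Let G be a short dicotic game. Then G = 0 (mod D⁻) if and only if: o(G) = N; for every right option G^R of G there is a left option G^{RL} of G^R with G^{RL} ≽ 0 (mod D⁻); and for every left option G^L of G there is a right option G^{LR} of G^L with G^{LR} ≼ 0 (mod D⁻). -/

import Mathlib

/-! Port note: `SetTheory.PGame` has been removed from Mathlib; the pieces used below are
restored here verbatim from Mathlib (December 2024) with their old meaning. -/

universe u

namespace SetTheory

inductive PGame : Type (u + 1)
  | mk : ∀ α β : Type u, (α → PGame) → (β → PGame) → PGame

namespace PGame

def LeftMoves : PGame → Type u
  | mk l _ _ _ => l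

def RightMoves : PGame → Type u
  | mk _ r _ _ => r

def moveLeft : ∀ g : PGame, LeftMoves g → PGame
  | mk _l _ L _ => L

def moveRight : ∀ g : PGame, RightMoves g → PGame
  | mk _ _r _ R => R

inductive IsOption : PGame → PGame → Prop
  | moveLeft {x : PGame} (i : x.LeftMoves) : IsOption (x.moveLeft i) x
  | moveRight {x : PGame} (i : x.RightMoves) : IsOption (x.moveRight i) x

def Identical : PGame.{u} → PGame.{u} → Prop
  | mk _ _ xL xR, mk _ _ yL yR =>
    Relator.BiTotal (fun i j ↦ Identical (xL i) (yL j)) ∧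
      Relator.BiTotal (fun i j ↦ Identical (xR i) (yR j))

instance : Zero PGame :=
  ⟨⟨PEmpty, PEmpty, PEmpty.elim, PEmpty.elim⟩⟩

def star : PGame.{u} :=
  ⟨PUnit, PUnit, fun _ => 0, fun _ => 0⟩

def neg : PGame → PGame
  | ⟨l, r, L, R⟩ => ⟨r, l, fun i => neg (R i), fun i => neg (L i)⟩

instance : Neg PGame :=
  ⟨neg⟩

noncomputable instance : Add PGame.{u} :=
  ⟨fun x y => by
    induction x generalizing y with | mk xl xr _ _ IHxl IHxr => _
    induction y with | mk yl yr yL yR IHyl IHyr => _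
    have y := mk yl yr yL yR
    refine ⟨xl ⊕ yl, xr ⊕ yr, Sum.rec ?_ ?_, Sum.rec ?_ ?_⟩
    · exact fun i => IHxl i y
    · exact IHyl
    · exact fun i => IHxr i y
    · exact IHyr⟩

noncomputable def birthday : PGame.{u} → Ordinal.{u}
  | ⟨_, _, xL, xR⟩ =>
    max (Ordinal.lsub.{u, u} fun i => birthday (xL i)) (Ordinal.lsub.{u, u} fun i => birthday (xR i))

theorem birthday_moveLeft_lt {x : PGame} (i : x.LeftMoves) :
    (x.moveLeft i).birthday < x.birthday := by
  cases x; rw [birthday]; exact lt_max_of_lt_left (Ordinal.lt_lsub _ i)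

theorem birthday_moveRight_lt {x : PGame} (i : x.RightMoves) :
    (x.moveRight i).birthday < x.birthday := by
  cases x; rw [birthday]; exact lt_max_of_lt_right (Ordinal.lt_lsub _ i)

end PGame

end SetTheory

open SetTheory PGame

namespace MisereDicot

def Follower (G' G : PGame) : Prop := Relation.ReflTransGen PGame.IsOption G' G

def IsShort (G : PGame) : Prop :=
  ∀ G', Follower G' G → Finite G'.LeftMoves ∧ Finite G'.RightMoves

def Dicot (G : PGame) : Prop :=
  ∀ G', Follower G' G → (IsEmpty G'.LeftMoves ↔ IsEmpty G'.RightMoves)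

mutual
def LeftWinsFirst (G : PGame) : Prop :=
  IsEmpty G.LeftMoves ∨ ∃ i, ¬ RightWinsFirst (G.moveLeft i)
termination_by G.birthday
decreasing_by exact PGame.birthday_moveLeft_lt i

def RightWinsFirst (G : PGame) : Prop :=
  IsEmpty G.RightMoves ∨ ∃ j, ¬ LeftWinsFirst (G.moveRight j)
termination_by G.birthday
decreasing_by exact PGame.birthday_moveRight_lt j
end

inductive MOutcome : Type
  | L | N | P | R
deriving DecidableEq

instance : LE MOutcome := ⟨fun a b => a = b ∨ a = .R ∨ b = .L⟩

noncomputable def outcome (G : PGame) : MOutcome := by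
  classical
  exact if LeftWinsFirst G then (if RightWinsFirst G then .N else .L)
        else (if RightWinsFirst G then .R else .P)

def Dge (G H : PGame) : Prop :=
  ∀ X : PGame, IsShort X → Dicot X → outcome (H + X) ≤ outcome (G + X)

def Deq (G H : PGame) : Prop :=
  ∀ X : PGame, IsShort X → Dicot X → outcome (G + X) = outcome (H + X)

def Dgt (G H : PGame) : Prop := Dge G H ∧ ¬ Deq G H

def DInvertible (G : PGame) : Prop :=
  ∃ H : PGame, IsShort H ∧ Dicot H ∧ Deq (G + H) 0

/-- The left option `G^L_i` is reversible through its right option `(G^L_i)^R_j ≼ G`. -/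
def LeftReversibleAt (G : PGame) (i : G.LeftMoves) (j : (G.moveLeft i).RightMoves) : Prop :=
  Dge G ((G.moveLeft i).moveRight j)

def RightReversibleAt (G : PGame) (j : G.RightMoves) (i : (G.moveRight j).LeftMoves) : Prop :=
  Dge ((G.moveRight j).moveLeft i) G

/-- `G` has a dominated left option (removable by the Domination theorem). -/
def LeftDominated (G : PGame) : Prop :=
  ∃ i i' : G.LeftMoves, ¬ (G.moveLeft i).Identical (G.moveLeft i') ∧
    Dge (G.moveLeft i') (G.moveLeft i)

def RightDominated (G : PGame) : Prop :=
  ∃ j j' : G.RightMoves, ¬ (G.moveRight j).Identical (G.moveRight j') ∧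
    Dge (G.moveRight j) (G.moveRight j')

/-- `G` has a non-atomic reversible left option (bypassable). -/
def LeftNonAtomicReversible (G : PGame) : Prop :=
  ∃ i j, LeftReversibleAt G i j ∧ Nonempty ((G.moveLeft i).moveRight j).LeftMoves

def RightNonAtomicReversible (G : PGame) : Prop :=
  ∃ j i, RightReversibleAt G j i ∧ Nonempty ((G.moveRight j).moveLeft i).RightMoves

/-- `G` has an atomic-reversible left option to which the atomic-reversibility
replacement applies nontrivially (i.e. changing the set of options): either some
other left option is a winning first move for Left (so the option is removable),
or the option is not already `*`. -/
def LeftAtomicReducible (G : PGame) : Prop :=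
  ∃ i j, LeftReversibleAt G i j ∧ IsEmpty ((G.moveLeft i).moveRight j).LeftMoves ∧
    ((∃ i', ¬ (G.moveLeft i').Identical (G.moveLeft i) ∧ ¬ RightWinsFirst (G.moveLeft i')) ∨
      ¬ (G.moveLeft i).Identical star)

def RightAtomicReducible (G : PGame) : Prop :=
  ∃ j i, RightReversibleAt G j i ∧ IsEmpty ((G.moveRight j).moveLeft i).RightMoves ∧
    ((∃ j', ¬ (G.moveRight j').Identical (G.moveRight j) ∧ ¬ LeftWinsFirst (G.moveRight j')) ∨
      ¬ (G.moveRight j).Identical star)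

/-- The Substitution theorem applies to `G`: `G = {A | C}` with `A` an
atomic-reversible left option and `C` an atomic-reversible right option. -/
def SubstitutionReducible (G : PGame) : Prop :=
  (∀ i i' : G.LeftMoves, (G.moveLeft i).Identical (G.moveLeft i')) ∧
  (∀ j j' : G.RightMoves, (G.moveRight j).Identical (G.moveRight j')) ∧
  (∃ i j, LeftReversibleAt G i j ∧ IsEmpty ((G.moveLeft i).moveRight j).LeftMoves) ∧
  (∃ j i, RightReversibleAt G j i ∧ IsEmpty ((G.moveRight j).moveLeft i).RightMoves)

/-- `G` is in canonical form: no follower admits any of the misère-dicot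
simplifications (domination, non-atomic reversibility, atomic reversibility,
substitution) producing an equivalent game with a different set of options. -/
def CanonicalForm (G : PGame) : Prop :=
  ∀ G', Follower G' G →
    ¬ (LeftDominated G' ∨ RightDominated G' ∨
       LeftNonAtomicReversible G' ∨ RightNonAtomicReversible G' ∨
       LeftAtomicReducible G' ∨ RightAtomicReducible G' ∨
       SubstitutionReducible G')

/-- The game `*2 = {0, * | 0, *}`. -/
def star2 : PGame :=
  PGame.mk Bool Bool (fun b => cond b star 0) (fun b => cond b star 0)

open Classical in
/-- The adjoint `G°` of `G`. -/
noncomputable def adjoint : PGame → PGame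
  | PGame.mk l r L R =>
    if IsEmpty l ∧ IsEmpty r then star
    else if IsEmpty l then PGame.mk r PUnit (fun j => adjoint (R j)) (fun _ => 0)
    else if IsEmpty r then PGame.mk PUnit l (fun _ => 0) (fun i => adjoint (L i))
    else PGame.mk r l (fun j => adjoint (R j)) (fun i => adjoint (L i))

/-- A universe of short games: a class closed under taking options, disjunctive
sums and conjugates. -/
structure GameUniverse where
  mem : PGame → Prop
  short_mem : ∀ G, mem G → IsShort G
  isOption_mem : ∀ G G', mem G → PGame.IsOption G' G → mem G'
  add_mem : ∀ G H, mem G → mem H → mem (G + H)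
  neg_mem : ∀ G, mem G → mem (-G)

/-- `G ≽ H` modulo the universe `U`. -/
def UGe (U : GameUniverse) (G H : PGame) : Prop :=
  ∀ X : PGame, U.mem X → outcome (H + X) ≤ outcome (G + X)

/-- `G = H` modulo the universe `U`. -/
def UEq (U : GameUniverse) (G H : PGame) : Prop :=
  ∀ X : PGame, U.mem X → outcome (G + X) = outcome (H + X)

/-- `G ≻ H` modulo the universe `U`. -/
def UGt (U : GameUniverse) (G H : PGame) : Prop := UGe U G H ∧ ¬ UEq U G H

/-- `J` is invertible in the universe `U`. -/
def UInvertible (U : GameUniverse) (J : PGame) : Prop :=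
  ∃ J' : PGame, U.mem J' ∧ UEq U (J + J') 0

end MisereDicot

/-!
A game is `= 0` iff it is both `≽ 0` and `≼ 0`, and conjugation turns `G ≼ 0` into `-G ≽ 0`.
So everything rests on the criterion: for a short dicot `G`, `G ≽ 0` iff Left wins `G` moving
first and every `G^R` has some `G^{RL} ≽ 0`.

Sufficiency is an induction on the test game `X`: Left's winning first move in `X` (or in `G`,
if `X` has no moves) stays winning in `G + X`, and Right's move to `G^R + X` is answered by
`G^{RL} + X`. Necessity builds test games refuting `G ≽ 0` out of adjoints `H°`, which make
`H + H°` a second-player win.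
-/

namespace SetTheory.PGame

variable {l r : Type u} {L : l → PGame.{u}} {R : r → PGame.{u}}

@[simp] theorem leftMoves_mk : (mk l r L R).LeftMoves = l := rfl
@[simp] theorem rightMoves_mk : (mk l r L R).RightMoves = r := rfl
@[simp] theorem moveLeft_mk (i : l) : (mk l r L R).moveLeft i = L i := rfl
@[simp] theorem moveRight_mk (j : r) : (mk l r L R).moveRight j = R j := rfl

instance isEmpty_leftMoves_zero : IsEmpty (LeftMoves 0) := inferInstanceAs (IsEmpty PEmpty)
instance isEmpty_rightMoves_zero : IsEmpty (RightMoves 0) := inferInstanceAs (IsEmpty PEmpty)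

theorem mk_add_mk {l' r' : Type u} {L' : l' → PGame.{u}} {R' : r' → PGame.{u}} :
    mk l r L R + mk l' r' L' R' =
      mk (l ⊕ l') (r ⊕ r') (Sum.elim (fun i => L i + mk l' r' L' R') (fun i => mk l r L R + L' i))
        (Sum.elim (fun j => R j + mk l' r' L' R') (fun j => mk l r L R + R' j)) := rfl

@[simp] theorem neg_mk : -mk l r L R = mk r l (fun j => -R j) (fun i => -L i) := rfl

protected theorem neg_neg (G : PGame) : - -G = G := by
  induction G with
  | mk l r L R ihl ihr => simp only [neg_mk, ihl, ihr]

theorem exists_moveLeft_neg_iff {G : PGame} {P : PGame → Prop} :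
    (∃ i, P ((-G).moveLeft i)) ↔ ∃ j, P (-G.moveRight j) := by
  cases G; rfl

protected theorem neg_zero : -(0 : PGame) = 0 := by
  show mk _ _ _ _ = mk _ _ _ _
  congr <;> funext i <;> exact i.elim

protected theorem neg_add (G H : PGame) : -(G + H) = -G + -H := by
  induction G generalizing H with
  | mk l r L R ihl ihr =>
    induction H with
    | mk l' r' L' R' ihl' ihr' =>
      simp only [mk_add_mk, neg_mk, mk.injEq, heq_eq_eq, true_and]
      constructor <;> funext s <;> cases s <;> simp [← neg_mk, ihl, ihr, ihl', ihr']

end SetTheory.PGame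

namespace MisereDicot

theorem follower_iff {G' G : PGame} : Follower G' G ↔
    G' = G ∨ (∃ i, Follower G' (G.moveLeft i)) ∨ ∃ j, Follower G' (G.moveRight j) := by
  constructor
  · intro h
    rcases Relation.ReflTransGen.cases_tail h with rfl | ⟨_, h, hopt⟩
    · exact Or.inl rfl
    · cases hopt with
      | moveLeft i => exact Or.inr (Or.inl ⟨i, h⟩)
      | moveRight j => exact Or.inr (Or.inr ⟨j, h⟩)
  · rintro (rfl | ⟨i, h⟩ | ⟨j, h⟩)
    · exact Relation.ReflTransGen.refl
    · exact h.tail (.moveLeft i)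
    · exact h.tail (.moveRight j)

theorem forall_follower_iff {P : PGame → Prop} {G : PGame} :
    (∀ G', Follower G' G → P G') ↔ P G ∧ (∀ i, ∀ G', Follower G' (G.moveLeft i) → P G') ∧
      ∀ j, ∀ G', Follower G' (G.moveRight j) → P G' := by
  simp only [follower_iff (G := G), or_imp, forall_and, forall_eq, exists_imp]
  rw [forall_comm (β := G.LeftMoves), forall_comm (β := G.RightMoves)]

theorem isShort_iff {G : PGame} : IsShort G ↔ (Finite G.LeftMoves ∧ Finite G.RightMoves) ∧
    (∀ i, IsShort (G.moveLeft i)) ∧ ∀ j, IsShort (G.moveRight j) :=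
  forall_follower_iff

theorem dicot_iff {G : PGame} : Dicot G ↔ (IsEmpty G.LeftMoves ↔ IsEmpty G.RightMoves) ∧
    (∀ i, Dicot (G.moveLeft i)) ∧ ∀ j, Dicot (G.moveRight j) :=
  forall_follower_iff

theorem IsShort.moveLeft {G : PGame} (h : IsShort G) (i : G.LeftMoves) :
    IsShort (G.moveLeft i) :=
  (isShort_iff.1 h).2.1 i

theorem IsShort.moveRight {G : PGame} (h : IsShort G) (j : G.RightMoves) :
    IsShort (G.moveRight j) :=
  (isShort_iff.1 h).2.2 j

theorem Dicot.moveLeft {G : PGame} (h : Dicot G) (i : G.LeftMoves) : Dicot (G.moveLeft i) :=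
  (dicot_iff.1 h).2.1 i

theorem Dicot.moveRight {G : PGame} (h : Dicot G) (j : G.RightMoves) : Dicot (G.moveRight j) :=
  (dicot_iff.1 h).2.2 j

theorem Dicot.isEmpty_leftMoves_iff {G : PGame} (h : Dicot G) :
    IsEmpty G.LeftMoves ↔ IsEmpty G.RightMoves :=
  (dicot_iff.1 h).1

theorem IsShort.finite_leftMoves {G : PGame} (h : IsShort G) : Finite G.LeftMoves :=
  (isShort_iff.1 h).1.1

section Mk

variable {l r : Type u} {L : l → PGame.{u}} {R : r → PGame.{u}}

theorem isShort_mk [Finite l] [Finite r] (hL : ∀ i, IsShort (L i)) (hR : ∀ j, IsShort (R j)) :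
    IsShort (mk l r L R) :=
  isShort_iff.2 ⟨⟨‹_›, ‹_›⟩, hL, hR⟩

theorem dicot_mk [Nonempty l] [Nonempty r] (hL : ∀ i, Dicot (L i)) (hR : ∀ j, Dicot (R j)) :
    Dicot (mk l r L R) :=
  dicot_iff.2 ⟨iff_of_false (not_isEmpty_of_nonempty l) (not_isEmpty_of_nonempty r), hL, hR⟩

end Mk

theorem isShort_zero : IsShort 0 :=
  isShort_iff.2 ⟨⟨inferInstance, inferInstance⟩, isEmptyElim, isEmptyElim⟩

theorem dicot_zero : Dicot 0 :=
  dicot_iff.2 ⟨iff_of_true inferInstance inferInstance, isEmptyElim, isEmptyElim⟩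

theorem IsShort.neg {G : PGame} (h : IsShort G) : IsShort (-G) := by
  induction G with
  | mk l r L R ihl ihr =>
    obtain ⟨⟨hl, hr⟩, hL, hR⟩ := isShort_iff.1 h
    exact isShort_iff.2 ⟨⟨hr, hl⟩, fun j => ihr j (hR j), fun i => ihl i (hL i)⟩

theorem Dicot.neg {G : PGame} (h : Dicot G) : Dicot (-G) := by
  induction G with
  | mk l r L R ihl ihr =>
    obtain ⟨h, hL, hR⟩ := dicot_iff.1 h
    exact dicot_iff.2 ⟨h.symm, fun j => ihr j (hR j), fun i => ihl i (hL i)⟩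

theorem leftWinsFirst_iff {G : PGame} :
    LeftWinsFirst G ↔ IsEmpty G.LeftMoves ∨ ∃ i, ¬ RightWinsFirst (G.moveLeft i) := by
  rw [LeftWinsFirst]

theorem rightWinsFirst_iff {G : PGame} :
    RightWinsFirst G ↔ IsEmpty G.RightMoves ∨ ∃ j, ¬ LeftWinsFirst (G.moveRight j) := by
  rw [RightWinsFirst]

theorem leftWinsFirst_zero : LeftWinsFirst 0 :=
  leftWinsFirst_iff.2 (Or.inl inferInstance)

theorem not_rightWinsFirst_iff {G : PGame} :
    ¬ RightWinsFirst G ↔ Nonempty G.RightMoves ∧ ∀ j, LeftWinsFirst (G.moveRight j) := by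
  simp only [rightWinsFirst_iff, not_or, not_isEmpty_iff, not_exists, not_not]

theorem leftWinsFirst_add_iff {G H : PGame} : LeftWinsFirst (G + H) ↔
    (IsEmpty G.LeftMoves ∧ IsEmpty H.LeftMoves) ∨
      (∃ i, ¬ RightWinsFirst (G.moveLeft i + H)) ∨ ∃ i, ¬ RightWinsFirst (G + H.moveLeft i) := by
  cases G; cases H
  simp [leftWinsFirst_iff, mk_add_mk, isEmpty_sum, Sum.exists]

theorem rightWinsFirst_add_iff {G H : PGame} : RightWinsFirst (G + H) ↔
    (IsEmpty G.RightMoves ∧ IsEmpty H.RightMoves) ∨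
      (∃ j, ¬ LeftWinsFirst (G.moveRight j + H)) ∨ ∃ j, ¬ LeftWinsFirst (G + H.moveRight j) := by
  cases G; cases H
  simp [rightWinsFirst_iff, mk_add_mk, isEmpty_sum, Sum.exists]

theorem not_leftWinsFirst_add_iff {G H : PGame} : ¬ LeftWinsFirst (G + H) ↔
    (Nonempty G.LeftMoves ∨ Nonempty H.LeftMoves) ∧
      (∀ i, RightWinsFirst (G.moveLeft i + H)) ∧ ∀ i, RightWinsFirst (G + H.moveLeft i) := by
  simp only [leftWinsFirst_add_iff, not_or, not_and_or, not_isEmpty_iff, not_exists, not_not]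

theorem not_rightWinsFirst_add_iff {G H : PGame} : ¬ RightWinsFirst (G + H) ↔
    (Nonempty G.RightMoves ∨ Nonempty H.RightMoves) ∧
      (∀ j, LeftWinsFirst (G.moveRight j + H)) ∧ ∀ j, LeftWinsFirst (G + H.moveRight j) := by
  simp only [rightWinsFirst_add_iff, not_or, not_and_or, not_isEmpty_iff, not_exists, not_not]

section EmptySummand

variable {K : PGame} [IsEmpty K.LeftMoves] [IsEmpty K.RightMoves]

theorem wins_add_of_isEmpty (G : PGame) :
    (LeftWinsFirst (G + K) ↔ LeftWinsFirst G) ∧ (RightWinsFirst (G + K) ↔ RightWinsFirst G) := by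
  induction G with
  | mk l r L R ihl ihr =>
    rw [leftWinsFirst_add_iff, rightWinsFirst_add_iff, leftWinsFirst_iff (G := mk l r L R),
      rightWinsFirst_iff (G := mk l r L R)]
    simp [ihl, ihr, ‹IsEmpty K.LeftMoves›, ‹IsEmpty K.RightMoves›]

theorem wins_of_isEmpty_add (G : PGame) :
    (LeftWinsFirst (K + G) ↔ LeftWinsFirst G) ∧ (RightWinsFirst (K + G) ↔ RightWinsFirst G) := by
  induction G with
  | mk l r L R ihl ihr =>
    rw [leftWinsFirst_add_iff, rightWinsFirst_add_iff, leftWinsFirst_iff (G := mk l r L R),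
      rightWinsFirst_iff (G := mk l r L R)]
    simp [ihl, ihr, ‹IsEmpty K.LeftMoves›, ‹IsEmpty K.RightMoves›]

end EmptySummand

theorem wins_neg (G : PGame) :
    (LeftWinsFirst (-G) ↔ RightWinsFirst G) ∧ (RightWinsFirst (-G) ↔ LeftWinsFirst G) := by
  induction G with
  | mk l r L R ihl ihr =>
    rw [leftWinsFirst_iff (G := mk l r L R), rightWinsFirst_iff (G := mk l r L R),
      leftWinsFirst_iff, rightWinsFirst_iff]
    simp [ihl, ihr]

theorem outcome_eq_N_iff {G : PGame} :
    outcome G = .N ↔ LeftWinsFirst G ∧ RightWinsFirst G := by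
  unfold outcome
  split_ifs <;> simp_all

theorem MOutcome.le_def {a b : MOutcome} : a ≤ b ↔ a = b ∨ a = .R ∨ b = .L := Iff.rfl

theorem outcome_le_iff {G H : PGame} : outcome G ≤ outcome H ↔
    (LeftWinsFirst G → LeftWinsFirst H) ∧ (RightWinsFirst H → RightWinsFirst G) := by
  unfold outcome
  split_ifs <;> simp_all [MOutcome.le_def]

theorem MOutcome.le_antisymm {a b : MOutcome} (hab : a ≤ b) (hba : b ≤ a) : a = b := by
  cases a <;> cases b <;> simp_all [MOutcome.le_def]

theorem Dicot.isEmpty_or_nonempty {G : PGame} (h : Dicot G) :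
    (IsEmpty G.LeftMoves ∧ IsEmpty G.RightMoves) ∨
      (Nonempty G.LeftMoves ∧ Nonempty G.RightMoves) := by
  rw [← not_isEmpty_iff, ← not_isEmpty_iff, h.isEmpty_leftMoves_iff]
  tauto

theorem adjoint_of_isEmpty {G : PGame} (hl : IsEmpty G.LeftMoves) (hr : IsEmpty G.RightMoves) :
    adjoint G = star := by
  cases G
  rw [adjoint, if_pos ⟨hl, hr⟩]

theorem adjoint_of_nonempty {G : PGame} (hl : Nonempty G.LeftMoves) (hr : Nonempty G.RightMoves) :
    adjoint G = mk G.RightMoves G.LeftMoves (fun j => adjoint (G.moveRight j))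
      (fun i => adjoint (G.moveLeft i)) := by
  cases G with
  | mk l r L R =>
    rw [← not_isEmpty_iff] at hl hr
    rw [adjoint, if_neg (fun h => hl h.1), if_neg (show ¬ IsEmpty l from hl),
      if_neg (show ¬ IsEmpty r from hr)]
    rfl

theorem isShort_star : IsShort star :=
  isShort_mk (fun _ => isShort_zero) (fun _ => isShort_zero)

theorem dicot_star : Dicot star :=
  dicot_mk (fun _ => dicot_zero) (fun _ => dicot_zero)

theorem Dicot.adjoint {G : PGame} (h : Dicot G) : Dicot (adjoint G) := by
  induction G with
  | mk l r L R ihl ihr =>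
    rcases h.isEmpty_or_nonempty with ⟨hl, hr⟩ | ⟨hl, hr⟩
    · rw [adjoint_of_isEmpty hl hr]
      exact dicot_star
    · rw [adjoint_of_nonempty hl hr]
      exact dicot_mk (fun j => ihr j (h.moveRight j)) (fun i => ihl i (h.moveLeft i))

theorem IsShort.adjoint {G : PGame} (hs : IsShort G) (hd : Dicot G) : IsShort (adjoint G) := by
  induction G with
  | mk l r L R ihl ihr =>
    rcases hd.isEmpty_or_nonempty with ⟨hl, hr⟩ | ⟨hl, hr⟩
    · rw [adjoint_of_isEmpty hl hr]
      exact isShort_star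
    · rw [adjoint_of_nonempty hl hr]
      obtain ⟨⟨hfl, hfr⟩, hsl, hsr⟩ := isShort_iff.1 hs
      exact isShort_iff.2 ⟨⟨hfr, hfl⟩, fun j => ihr j (hsr j) (hd.moveRight j),
        fun i => ihl i (hsl i) (hd.moveLeft i)⟩

/-- Every move in one component is answered by the mirror move in the other. -/
theorem not_wins_add_adjoint {G : PGame} (h : Dicot G) :
    ¬ LeftWinsFirst (G + adjoint G) ∧ ¬ RightWinsFirst (G + adjoint G) := by
  induction G with
  | mk l r L R ihl ihr =>
    rcases h.isEmpty_or_nonempty with ⟨hl, hr⟩ | ⟨hl, hr⟩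
    · rw [adjoint_of_isEmpty hl hr, not_leftWinsFirst_add_iff, not_rightWinsFirst_add_iff]
      refine ⟨⟨Or.inr ⟨PUnit.unit⟩, isEmptyElim, fun _ => ?_⟩,
        ⟨Or.inr ⟨PUnit.unit⟩, isEmptyElim, fun _ => ?_⟩⟩
      · exact (wins_add_of_isEmpty (K := 0) _).2.2 (rightWinsFirst_iff.2 (Or.inl hr))
      · exact (wins_add_of_isEmpty (K := 0) _).1.2 (leftWinsFirst_iff.2 (Or.inl hl))
    · rw [adjoint_of_nonempty hl hr, not_leftWinsFirst_add_iff, not_rightWinsFirst_add_iff]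
      refine ⟨⟨Or.inl hl, fun i => ?_, fun j => ?_⟩, ⟨Or.inl hr, fun j => ?_, fun i => ?_⟩⟩
      · exact rightWinsFirst_add_iff.2 (Or.inr (Or.inr ⟨i, (ihl i (h.moveLeft i)).1⟩))
      · exact rightWinsFirst_add_iff.2 (Or.inr (Or.inl ⟨j, (ihr j (h.moveRight j)).1⟩))
      · exact leftWinsFirst_add_iff.2 (Or.inr (Or.inr ⟨j, (ihr j (h.moveRight j)).2⟩))
      · exact leftWinsFirst_add_iff.2 (Or.inr (Or.inl ⟨i, (ihl i (h.moveLeft i)).2⟩))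

theorem dge_iff {G H : PGame} : Dge G H ↔ ∀ X, IsShort X → Dicot X →
    (LeftWinsFirst (H + X) → LeftWinsFirst (G + X)) ∧
      (RightWinsFirst (G + X) → RightWinsFirst (H + X)) := by
  simp only [Dge, outcome_le_iff]

theorem dge_zero_iff_forall {G : PGame} : Dge G 0 ↔ ∀ X, IsShort X → Dicot X →
    (LeftWinsFirst X → LeftWinsFirst (G + X)) ∧ (RightWinsFirst (G + X) → RightWinsFirst X) := by
  simp only [dge_iff, (wins_of_isEmpty_add (K := 0) _).1, (wins_of_isEmpty_add (K := 0) _).2]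

theorem deq_iff_dge_and_dge {G H : PGame} : Deq G H ↔ Dge G H ∧ Dge H G := by
  refine ⟨fun h => ⟨fun X hs hd => ?_, fun X hs hd => ?_⟩,
    fun ⟨h₁, h₂⟩ X hs hd => MOutcome.le_antisymm (h₂ X hs hd) (h₁ X hs hd)⟩
  · rw [h X hs hd]; exact Or.inl rfl
  · rw [h X hs hd]; exact Or.inl rfl

/-- In `{X | (G^L)°}`, Left's move to `G^L` is answered by the mirror move to `(G^L)°`. -/
theorem exists_not_leftWinsFirst_add_of_rightWinsFirst_add {G X : PGame} (hGs : IsShort G)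
    (hGd : Dicot G) (hXs : IsShort X) (hXd : Dicot X) (hX : ¬ RightWinsFirst X)
    (hGX : RightWinsFirst (G + X)) :
    ∃ W, IsShort W ∧ Dicot W ∧ LeftWinsFirst W ∧ ¬ LeftWinsFirst (G + W) := by
  have := hGs.finite_leftMoves
  have hGl : Nonempty G.LeftMoves := by
    by_contra hGl
    have : IsEmpty G.LeftMoves := not_nonempty_iff.1 hGl
    have : IsEmpty G.RightMoves := hGd.isEmpty_leftMoves_iff.1 this
    exact hX ((wins_of_isEmpty_add X).2.1 hGX)
  refine ⟨mk PUnit G.LeftMoves (fun _ => X) (fun i => adjoint (G.moveLeft i)), ?_, ?_, ?_, ?_⟩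
  · exact isShort_mk (fun _ => hXs) (fun i => (hGs.moveLeft i).adjoint (hGd.moveLeft i))
  · exact dicot_mk (fun _ => hXd) (fun i => (hGd.moveLeft i).adjoint)
  · exact leftWinsFirst_iff.2 (Or.inr ⟨PUnit.unit, hX⟩)
  · refine not_leftWinsFirst_add_iff.2 ⟨Or.inl hGl, fun i => ?_, fun _ => hGX⟩
    exact rightWinsFirst_add_iff.2
      (Or.inr (Or.inr ⟨i, (not_wins_add_adjoint (hGd.moveLeft i)).1⟩))

theorem not_dge_zero_iff {G : PGame} (hs : IsShort G) (hd : Dicot G) : ¬ Dge G 0 ↔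
    ∃ W, IsShort W ∧ Dicot W ∧ LeftWinsFirst W ∧ ¬ LeftWinsFirst (G + W) := by
  rw [dge_zero_iff_forall]
  refine ⟨fun h => ?_, fun ⟨W, hWs, hWd, hW, hGW⟩ h => hGW ((h W hWs hWd).1 hW)⟩
  by_contra hW
  push Not at hW
  refine h fun X hXs hXd => ⟨hW X hXs hXd, fun hGX => by_contra fun hX => ?_⟩
  obtain ⟨W, hWs, hWd, hWl, hGW⟩ :=
    exists_not_leftWinsFirst_add_of_rightWinsFirst_add hs hd hXs hXd hX hGX
  exact hGW (hW W hWs hWd hWl)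

theorem dge_zero_of_leftWinsFirst {G : PGame} (hL : LeftWinsFirst G)
    (hR : ∀ j, ∃ i, Dge ((G.moveRight j).moveLeft i) 0) : Dge G 0 := by
  refine dge_zero_iff_forall.2 fun X hXs hXd => ?_
  induction X with
  | mk l r L R ihl ihr =>
    refine ⟨fun hX => ?_, fun hGX => by_contra fun hX => ?_⟩
    · rcases leftWinsFirst_iff.1 hX with hl | ⟨i, hi⟩
      · have : IsEmpty (mk l r L R).RightMoves := hXd.isEmpty_leftMoves_iff.1 hl
        exact (wins_add_of_isEmpty G).1.2 hL
      · exact leftWinsFirst_add_iff.2 (Or.inr (Or.inr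
          ⟨i, fun h => hi ((ihl i (hXs.moveLeft i) (hXd.moveLeft i)).2 h)⟩))
    · obtain ⟨hr, hRk⟩ := not_rightWinsFirst_iff.1 hX
      refine not_rightWinsFirst_add_iff.2 ⟨Or.inr hr, fun j => ?_, fun k => ?_⟩ hGX
      · obtain ⟨i, hi⟩ := hR j
        exact leftWinsFirst_add_iff.2 (Or.inr (Or.inl
          ⟨i, fun h => hX ((dge_zero_iff_forall.1 hi _ hXs hXd).2 h)⟩))
      · exact (ihr k (hXs.moveRight k) (hXd.moveRight k)).1 (hRk k)

/-- If no `G^{RL}` were `≽ 0`, each would be refuted by some `W_i`, and then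
`X = {{0 | (G^R)°} | 0, W_i}` would satisfy `¬ RightWinsFirst X` and `RightWinsFirst (G + X)`. -/
theorem exists_dge_zero_of_dge_zero {G : PGame} (hs : IsShort G) (hd : Dicot G) (h : Dge G 0)
    (j : G.RightMoves) : ∃ i, Dge ((G.moveRight j).moveLeft i) 0 := by
  set K := G.moveRight j
  have hKs : IsShort K := hs.moveRight j
  have hKd : Dicot K := hd.moveRight j
  by_contra hK
  push Not at hK
  choose W hWs hWd hWl hWn using fun i =>
    (not_dge_zero_iff (hKs.moveLeft i) (hKd.moveLeft i)).1 (hK i)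
  let A : PGame := mk PUnit PUnit (fun _ => 0) (fun _ => adjoint K)
  let X : PGame := mk PUnit (Option K.LeftMoves) (fun _ => A) (fun o => o.elim 0 W)
  have := hKs.finite_leftMoves
  have hXs : IsShort X := isShort_mk
    (fun _ => isShort_mk (fun _ => isShort_zero) (fun _ => hKs.adjoint hKd))
    (fun o => o.rec isShort_zero hWs)
  have hXd : Dicot X := dicot_mk (fun _ => dicot_mk (fun _ => dicot_zero) (fun _ => hKd.adjoint))
    (fun o => o.rec dicot_zero hWd)
  have hX : ¬ RightWinsFirst X :=
    not_rightWinsFirst_iff.2 ⟨⟨none⟩, fun o => o.rec leftWinsFirst_zero hWl⟩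
  have hKX : ¬ LeftWinsFirst (K + X) := by
    refine not_leftWinsFirst_add_iff.2 ⟨Or.inr ⟨PUnit.unit⟩, fun i => ?_, fun _ => ?_⟩
    · exact rightWinsFirst_add_iff.2 (Or.inr (Or.inr ⟨some i, hWn i⟩))
    · exact rightWinsFirst_add_iff.2 (Or.inr (Or.inr ⟨PUnit.unit, (not_wins_add_adjoint hKd).1⟩))
  have hGX : RightWinsFirst (G + X) := rightWinsFirst_add_iff.2 (Or.inr (Or.inl ⟨j, hKX⟩))
  exact (not_dge_zero_iff hs hd).2
    (exists_not_leftWinsFirst_add_of_rightWinsFirst_add hs hd hXs hXd hX hGX) h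

theorem dge_zero_iff {G : PGame} (hs : IsShort G) (hd : Dicot G) :
    Dge G 0 ↔ LeftWinsFirst G ∧ ∀ j, ∃ i, Dge ((G.moveRight j).moveLeft i) 0 := by
  refine ⟨fun h => ⟨?_, exists_dge_zero_of_dge_zero hs hd h⟩,
    fun h => dge_zero_of_leftWinsFirst h.1 h.2⟩
  exact (wins_add_of_isEmpty G).1.1
    ((dge_zero_iff_forall.1 h 0 isShort_zero dicot_zero).1 leftWinsFirst_zero)

theorem Dge.neg {G H : PGame} (h : Dge G H) : Dge (-H) (-G) := by
  rw [dge_iff] at h ⊢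
  intro X hXs hXd
  rw [← PGame.neg_neg X, ← PGame.neg_add, ← PGame.neg_add, (wins_neg _).1, (wins_neg _).1,
    (wins_neg _).2, (wins_neg _).2]
  exact (h (-X) hXs.neg hXd.neg).symm

theorem zero_dge_iff_neg_dge_zero {G : PGame} : Dge 0 G ↔ Dge (-G) 0 := by
  refine ⟨fun h => ?_, fun h => ?_⟩
  · simpa only [PGame.neg_zero] using h.neg
  · simpa only [PGame.neg_zero, PGame.neg_neg] using h.neg

theorem zero_dge_iff {G : PGame} (hs : IsShort G) (hd : Dicot G) :
    Dge 0 G ↔ RightWinsFirst G ∧ ∀ i, ∃ j, Dge 0 ((G.moveLeft i).moveRight j) := by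
  rw [zero_dge_iff_neg_dge_zero, dge_zero_iff hs.neg hd.neg, (wins_neg G).1]
  cases G with
  | mk l r L R =>
    refine and_congr_right' (forall_congr' fun i => ?_)
    exact (exists_moveLeft_neg_iff (G := L i) (P := (Dge · 0))).trans
      (exists_congr fun j => zero_dge_iff_neg_dge_zero.symm)

/-- `G = 0` (mod `D⁻`) iff `o(G) = N`, every right option of `G` has a
left option `≽ 0`, and every left option of `G` has a right option `≼ 0`. -/
theorem stmt7 (G : PGame) (hs : IsShort G) (hd : Dicot G) :
    Deq G 0 ↔ outcome G = MOutcome.N ∧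
      (∀ j : G.RightMoves, ∃ i : (G.moveRight j).LeftMoves,
        Dge ((G.moveRight j).moveLeft i) 0) ∧
      (∀ i : G.LeftMoves, ∃ j : (G.moveLeft i).RightMoves,
        Dge 0 ((G.moveLeft i).moveRight j)) := by
  rw [deq_iff_dge_and_dge, dge_zero_iff hs hd, zero_dge_iff hs hd, outcome_eq_N_iff]
  tauto

end MisereDicot
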